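/- Let R be a commutative ring and B a commutative R-algebra. Suppose there exist finitely many elements f_1,…,f_k generating B as an R-algebra and a subring C ⊆ B such that each f_i has a positive power f_i^{n_i} ∈ C. Then B is a finitely generated C-module. -/
import Mathlib

theorem finite_over_subalgebra_of_powers_mem {R B : Type*} [CommRing R] [CommRing B]
    [Algebra R B] {k : ℕ} (f : Fin k → B)
    (hgen : Algebra.adjoin R (Set.range f) = ⊤)
    (C : Subalgebra R B) (n : Fin k → ℕ) (hn : ∀ i, 0 < n i)
    (hfC : ∀ i, f i ^ n i ∈ C) :
    Module.Finite C B := by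
  have hint : ∀ x ∈ Set.range f, IsIntegral C x := by
    rintro _ ⟨i, rfl⟩
    refine IsIntegral.of_pow (hn i) ?_
    have : f i ^ n i = algebraMap C B ⟨f i ^ n i, hfC i⟩ := rfl
    rw [this]
    exact isIntegral_algebraMap
  have hadj : Algebra.adjoin C (Set.range f) = ⊤ := by
    rw [← Algebra.adjoin_adjoin_of_tower (R := R), hgen]
    rw [Algebra.coe_top, Algebra.adjoin_univ]
  refine ⟨?_⟩
  rw [← Algebra.top_toSubmodule, ← hadj]
  exact fg_adjoin_of_finite (Set.finite_range f) hint
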